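/- As x → ∞, ∑_{n ≤ x} φ(n)/(n(n+1)) = (1/ζ(2)) log x + O(1). -/

import Mathlib

/-!
Since `φ(n)/n² = ∑_{de = n} (μ(d)/d²)(1/e)`, the partial sum of `φ(n)/n²` up to `x` equals
`∑_{d ≤ x} (μ(d)/d²) H_{⌊x/d⌋}`, and `H_{⌊x/d⌋} = log x + O(1 + log d)`. As
`∑ μ(d)(1 + log d)/d²` converges absolutely and `∑ μ(d)/d² = 1/ζ(2) = 6/π²`, this partial sum is
`(6/π²) log x + O(1)`. Replacing `n²` by `n(n+1)` changes the `n`-th term by at most `1/n²`.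
-/

open Finset Real
open scoped ArithmeticFunction.Moebius

lemma abs_harmonic_floor_div_sub_log_le {x d : ℝ} (hx : 1 ≤ x) (hd : 1 ≤ d) :
    |harmonic ⌊x / d⌋₊ - log x| ≤ 1 + log d := by
  have hlog_div : log (x / d) = log x - log d := log_div (by positivity) (by positivity)
  have hlower : log x - log d ≤ harmonic ⌊x / d⌋₊ :=
    hlog_div ▸ log_le_harmonic_floor _ (by positivity)
  have hupper : (harmonic ⌊x / d⌋₊ : ℝ) ≤ 1 + log x := by
    rcases le_or_gt 1 (x / d) with h | h
    · linarith [harmonic_floor_le_one_add_log _ h, log_nonneg hd]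
    · rw [Nat.floor_eq_zero.mpr h, harmonic_zero, Rat.cast_zero]
      linarith [log_nonneg hx]
  rw [abs_le]
  constructor <;> linarith [log_nonneg hd]

lemma summable_one_add_log_div_sq : Summable fun n : ℕ => (1 + log n) / (n : ℝ) ^ 2 := by
  refine Summable.of_nonneg_of_le (fun n => by positivity) (fun n => ?_)
    ((summable_nat_rpow.mpr (by norm_num : (-3 / 2 : ℝ) < -1)).mul_left 3)
  rcases n.eq_zero_or_pos with rfl | hn
  · simp
  have hn : (1 : ℝ) ≤ n := Nat.one_le_cast.mpr hn
  have hsqrt : 1 + log n ≤ 3 * (n : ℝ) ^ (1 / 2 : ℝ) := by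
    have hlog := log_le_rpow_div (x := n) (by positivity) (by norm_num : (0 : ℝ) < 1 / 2)
    have hone := one_le_rpow hn (by norm_num : (0 : ℝ) ≤ 1 / 2)
    linarith
  have hpow : (n : ℝ) ^ (-3 / 2 : ℝ) = (n : ℝ) ^ (1 / 2 : ℝ) / (n : ℝ) ^ 2 := by
    rw [← rpow_natCast, ← rpow_sub (by positivity)]
    norm_num
  rw [hpow, mul_div_assoc']
  gcongr

namespace ArithmeticFunction

noncomputable def natInv : ArithmeticFunction ℝ := ⟨fun n => (n : ℝ)⁻¹, by simp⟩

@[simp]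
lemma natInv_apply (n : ℕ) : natInv n = (n : ℝ)⁻¹ := rfl

lemma sum_Ioc_natInv (M : ℕ) : ∑ m ∈ Ioc 0 M, natInv m = harmonic M := by
  simp [harmonic_eq_sum_Icc, ← Icc_add_one_left_eq_Ioc]

theorem hasSum_mul_harmonic_floor_div (f : ArithmeticFunction ℝ) (x : ℝ) :
    HasSum (fun d => f d * harmonic ⌊x / d⌋₊) (∑ n ∈ Icc 1 ⌊x⌋₊, (f * natInv) n) := by
  rw [show Icc 1 ⌊x⌋₊ = Ioc 0 ⌊x⌋₊ from Icc_add_one_left_eq_Ioc 0 _, sum_Ioc_mul_eq_sum_sum]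
  simp_rw [sum_Ioc_natInv, ← Nat.floor_div_natCast]
  refine hasSum_sum_of_ne_finset_zero fun d hd => ?_
  rcases d.eq_zero_or_pos with rfl | hd0
  · simp
  have hxd : ⌊x⌋₊ < d := by simpa [hd0] using hd
  simp [Nat.floor_div_natCast, Nat.div_eq_of_lt hxd]

theorem abs_sum_mul_natInv_sub_tsum_mul_log_le (f : ArithmeticFunction ℝ)
    (hf : Summable fun d => |f d| * (1 + Real.log d)) {x : ℝ} (hx : 1 ≤ x) :
    |∑ n ∈ Icc 1 ⌊x⌋₊, (f * natInv) n - (∑' d, f d) * Real.log x| ≤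
      ∑' d, |f d| * (1 + Real.log d) := by
  have hf_summable : Summable f := hf.of_norm_bounded fun d =>
    le_mul_of_one_le_right (abs_nonneg _) (by linarith [Real.log_natCast_nonneg d])
  refine ((hasSum_mul_harmonic_floor_div f x).sub
    (hf_summable.hasSum.mul_right (Real.log x))).norm_le_of_bounded hf.hasSum fun d => ?_
  rcases d.eq_zero_or_pos with rfl | hd
  · simp
  rw [Real.norm_eq_abs, ← mul_sub, abs_mul]
  exact mul_le_mul_of_nonneg_left
    (abs_harmonic_floor_div_sub_log_le hx (Nat.one_le_cast.mpr hd)) (abs_nonneg _)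

noncomputable def moebiusDivSq : ArithmeticFunction ℝ := ⟨fun n => μ n / (n : ℝ) ^ 2, by simp⟩

@[simp]
lemma moebiusDivSq_apply (n : ℕ) : moebiusDivSq n = μ n / (n : ℝ) ^ 2 := rfl

lemma totient_div_sq_eq_moebiusDivSq_mul_natInv (n : ℕ) :
    (n.totient : ℝ) / n ^ 2 = (moebiusDivSq * natInv) n := by
  rcases n.eq_zero_or_pos with rfl | hn
  · simp
  have hφ : ∑ x ∈ n.divisorsAntidiagonal, (μ x.1 : ℝ) * x.2 = n.totient :=
    sum_eq_iff_sum_mul_moebius_eq (f := fun m => (m.totient : ℝ)) (g := fun m => (m : ℝ)) |>.mp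
      (fun m _ => by exact_mod_cast Nat.sum_totient m) n hn
  rw [← hφ, sum_div, mul_apply]
  refine sum_congr rfl fun x hx => ?_
  obtain ⟨rfl, hn0⟩ := Nat.mem_divisorsAntidiagonal.mp hx
  simp only [moebiusDivSq_apply, natInv_apply, Nat.cast_mul]
  field_simp

lemma summable_abs_moebiusDivSq_mul_one_add_log :
    Summable fun n => |moebiusDivSq n| * (1 + Real.log n) := by
  refine summable_one_add_log_div_sq.of_nonneg_of_le (fun n => ?_) (fun n => ?_)
  · have := Real.log_natCast_nonneg n
    positivity
  · have hμ : |(μ n : ℝ)| ≤ 1 := by exact_mod_cast abs_moebius_le_one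
    rw [moebiusDivSq_apply, abs_div, abs_of_nonneg (sq_nonneg (n : ℝ)), div_mul_eq_mul_div]
    gcongr
    exact mul_le_of_le_one_left (by linarith [Real.log_natCast_nonneg n]) hμ

lemma tsum_moebiusDivSq : ∑' n, moebiusDivSq n = 6 / π ^ 2 := by
  have hs : (1 : ℝ) < (2 : ℂ).re := by norm_num
  have hL := LSeries_zeta_mul_Lseries_moebius hs
  rw [LSeries_zeta_eq_riemannZeta hs, riemannZeta_two] at hL
  have hterm : ∀ n, LSeries.term (fun n => (μ n : ℂ)) 2 n = (moebiusDivSq n : ℂ) := by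
    intro n
    rcases n.eq_zero_or_pos with rfl | hn
    · simp
    simp [LSeries.term_of_ne_zero hn.ne']
  rw [LSeries, tsum_congr hterm, ← Complex.ofReal_tsum] at hL
  apply Complex.ofReal_injective
  simp only [Complex.ofReal_div, Complex.ofReal_pow, Complex.ofReal_ofNat]
  field_simp at hL ⊢
  linear_combination hL

end ArithmeticFunction

open ArithmeticFunction in
theorem exists_abs_sum_totient_div_sq_sub_log_le :
    ∃ C, ∀ x : ℝ, 1 ≤ x →
      |∑ n ∈ Icc 1 ⌊x⌋₊, (n.totient : ℝ) / n ^ 2 - 6 / π ^ 2 * Real.log x| ≤ C := by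
  refine ⟨∑' n, |moebiusDivSq n| * (1 + Real.log n), fun x hx => ?_⟩
  simp_rw [totient_div_sq_eq_moebiusDivSq_mul_natInv, ← tsum_moebiusDivSq]
  exact abs_sum_mul_natInv_sub_tsum_mul_log_le _ summable_abs_moebiusDivSq_mul_one_add_log hx

lemma abs_totient_div_sq_sub_totient_div_mul_succ_le (n : ℕ) :
    |(n.totient : ℝ) / n ^ 2 - n.totient / (n * (n + 1))| ≤ 1 / (n : ℝ) ^ 2 := by
  rcases n.eq_zero_or_pos with rfl | hn
  · simp
  have hφ : (n.totient : ℝ) ≤ n := by exact_mod_cast n.totient_le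
  have hn : (0 : ℝ) < n := by exact_mod_cast hn
  have hdiff : (n.totient : ℝ) / n ^ 2 - n.totient / (n * (n + 1)) =
      n.totient / (n + 1) / n ^ 2 := by
    field_simp
    ring
  rw [hdiff, abs_of_nonneg (by positivity)]
  gcongr
  rw [div_le_one (by positivity)]
  linarith

lemma abs_sum_totient_div_sq_sub_sum_totient_div_mul_succ_le (s : Finset ℕ) :
    |∑ n ∈ s, (n.totient : ℝ) / n ^ 2 - ∑ n ∈ s, (n.totient : ℝ) / (n * (n + 1))| ≤
      ∑' n : ℕ, 1 / (n : ℝ) ^ 2 := by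
  rw [← sum_sub_distrib]
  calc _ ≤ ∑ n ∈ s, 1 / (n : ℝ) ^ 2 := (abs_sum_le_sum_abs _ _).trans <|
        sum_le_sum fun n _ => abs_totient_div_sq_sub_totient_div_mul_succ_le n
    _ ≤ _ := (summable_one_div_nat_pow.mpr one_lt_two).sum_le_tsum _ fun n _ => by positivity

theorem totient_div_n_np1_sum_asymptotic :
    ∃ A : ℝ, ∀ x : ℝ, 2 ≤ x →
      |(∑ n ∈ Finset.Icc 1 ⌊x⌋₊, (Nat.totient n : ℝ) / ((n : ℝ) * (n + 1)))
        - (1 / (Real.pi ^ 2 / 6)) * Real.log x| ≤ A := by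
  obtain ⟨C, hC⟩ := exists_abs_sum_totient_div_sq_sub_log_le
  refine ⟨C + ∑' n : ℕ, 1 / (n : ℝ) ^ 2, fun x hx => ?_⟩
  have hmain := hC x (by linarith)
  have hcomparison := abs_sum_totient_div_sq_sub_sum_totient_div_mul_succ_le (Icc 1 ⌊x⌋₊)
  rw [one_div_div]
  rw [abs_le] at hmain hcomparison ⊢
  constructor <;> linarith
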